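/- Let E be a real inner product space and Δ : E →ₗ[ℝ] E a symmetric linear map satisfying the compactness property, the weak-regularity property, and the coercivity estimate with some constant k > 0. Then ker Δ is finite-dimensional, and, writing H for the orthogonal projection of E onto ker Δ, for every α ∈ E there exists a unique β ∈ (ker Δ)ᗮ such that Δ β = α − H α. (Existence and uniqueness of the Green operator, Theorem 2.) -/

import Mathlib

/-!
Riesz's lemma turns the compactness property on `ker Δ`, where `Δ` vanishes, into
finite-dimensionality, so the orthogonal projection `H` onto `ker Δ` exists. For `α ⊥ ker Δ` the
functional `Δ θ ↦ ⟪α, θ⟫` is well defined on `range Δ` and bounded there by coercivity;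
Hahn–Banach extends it to `E`, weak regularity represents it by some `ω`, and symmetry gives
`Δ ω = α`. Applied to `α - H α`, this gives existence; uniqueness holds because
`ker Δ ∩ (ker Δ)ᗮ = 0`, both for the decomposition `α = (α - H α) + H α` and for `Δ` on `(ker Δ)ᗮ`.
-/

open scoped RealInnerProductSpace

theorem FiniteDimensional.of_forall_bounded_exists_cauchySeq_subseq {𝕜 F : Type*}
    [NontriviallyNormedField 𝕜] [CompleteSpace 𝕜] [NormedAddCommGroup F] [NormedSpace 𝕜 F]
    (h : ∀ (u : ℕ → F) (c : ℝ), (∀ n, ‖u n‖ ≤ c) → ∃ φ : ℕ → ℕ, StrictMono φ ∧ CauchySeq (u ∘ φ)) :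
    FiniteDimensional 𝕜 F := by
  by_contra hinf
  obtain ⟨R, u, -, hu_le, hu_sep⟩ := exists_seq_norm_le_one_le_norm_sub hinf
  obtain ⟨φ, hφ, hcauchy⟩ := h u R hu_le
  obtain ⟨N, hN⟩ := Metric.cauchySeq_iff'.mp hcauchy 1 one_pos
  have hlt := hN (N + 1) N.le_succ
  have hge := hu_sep (hφ N.lt_succ_self).ne'
  rw [dist_eq_norm] at hlt
  exact hlt.not_ge hge

theorem Submodule.eq_of_sub_mem_of_mem_orthogonal {𝕜 F : Type*} [RCLike 𝕜] [NormedAddCommGroup F]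
    [InnerProductSpace 𝕜 F] {K : Submodule 𝕜 F} {x y : F} (hx : x ∈ Kᗮ) (hy : y ∈ Kᗮ)
    (h : x - y ∈ K) : x = y :=
  sub_eq_zero.mp <| Submodule.disjoint_def.mp K.orthogonal_disjoint _ h (Kᗮ.sub_mem hx hy)

namespace LinearMap

variable {E : Type*} [NormedAddCommGroup E] [InnerProductSpace ℝ E] {Δ : E →ₗ[ℝ] E}

theorem finiteDimensional_ker_of_compact
    (hcompact : ∀ (α : ℕ → E) (c : ℝ), 0 < c → (∀ n, ‖α n‖ ≤ c) →
      (∀ n, ‖Δ (α n)‖ ≤ c) → ∃ φ : ℕ → ℕ, StrictMono φ ∧ CauchySeq (α ∘ φ)) :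
    FiniteDimensional ℝ (ker Δ) := by
  refine .of_forall_bounded_exists_cauchySeq_subseq fun u c hu => ?_
  obtain ⟨φ, hφ, hcauchy⟩ := hcompact (fun n => u n) (max c 1) (by positivity)
    (fun n => (hu n).trans (le_max_left _ _)) (fun n => by simp)
  exact ⟨φ, hφ, Metric.cauchySeq_iff'.mpr fun ε hε => Metric.cauchySeq_iff'.mp hcauchy ε hε⟩

theorem inner_eq_of_mem_orthogonal_ker {α θ₁ θ₂ : E} (hα : α ∈ (ker Δ)ᗮ)
    (h : Δ θ₁ = Δ θ₂) : ⟪α, θ₁⟫ = ⟪α, θ₂⟫ := by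
  have hsub : θ₁ - θ₂ ∈ ker Δ := by simp [h]
  rw [← sub_eq_zero, ← inner_sub_right]
  exact Submodule.inner_left_of_mem_orthogonal hsub hα

theorem exists_mem_orthogonal_ker_apply_eq [(ker Δ).HasOrthogonalProjection] (θ : E) :
    ∃ γ ∈ (ker Δ)ᗮ, Δ γ = Δ θ :=
  ⟨θ - (ker Δ).starProjection θ, (ker Δ).sub_starProjection_mem_orthogonal θ, by
    rw [map_sub, (ker Δ).starProjection_apply_mem θ, sub_zero]⟩

theorem abs_inner_le_of_mem_orthogonal_ker [(ker Δ).HasOrthogonalProjection] {k : ℝ}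
    (hcoercive : ∀ γ ∈ (ker Δ)ᗮ, ‖γ‖ ≤ k * ‖Δ γ‖) {α : E} (hα : α ∈ (ker Δ)ᗮ) (θ : E) :
    |⟪α, θ⟫| ≤ k * ‖α‖ * ‖Δ θ‖ := by
  obtain ⟨γ, hγ, hΔγ⟩ := exists_mem_orthogonal_ker_apply_eq (Δ := Δ) θ
  calc |⟪α, θ⟫| = |⟪α, γ⟫| := by rw [inner_eq_of_mem_orthogonal_ker hα hΔγ]
    _ ≤ ‖α‖ * ‖γ‖ := abs_real_inner_le_norm α γ
    _ ≤ ‖α‖ * (k * ‖Δ γ‖) := by gcongr; exact hcoercive γ hγ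
    _ = k * ‖α‖ * ‖Δ θ‖ := by rw [hΔγ]; ring

theorem exists_continuous_comp_eq_inner [(ker Δ).HasOrthogonalProjection] {k : ℝ}
    (hcoercive : ∀ γ ∈ (ker Δ)ᗮ, ‖γ‖ ≤ k * ‖Δ γ‖) {α : E} (hα : α ∈ (ker Δ)ᗮ) :
    ∃ L : E →L[ℝ] ℝ, ∀ θ, L (Δ θ) = ⟪α, θ⟫ := by
  let g : range Δ →ₗ[ℝ] ℝ := (ker Δ).liftQ (innerₛₗ ℝ α)
    (fun θ hθ => inner_eq_of_mem_orthogonal_ker hα (hθ.trans Δ.map_zero.symm) |>.trans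
      (inner_zero_right α)) ∘ₗ Δ.quotKerEquivRange.symm.toLinearMap
  have hg : ∀ θ, g ⟨Δ θ, mem_range_self Δ θ⟩ = ⟪α, θ⟫ := fun θ => by
    simp only [g, comp_apply, LinearEquiv.coe_coe, quotKerEquivRange_symm_apply_image]
    rfl
  have hbound : ∀ x, ‖g x‖ ≤ k * ‖α‖ * ‖x‖ := by
    rintro ⟨_, θ, rfl⟩
    rw [hg, Real.norm_eq_abs]
    exact abs_inner_le_of_mem_orthogonal_ker hcoercive hα θ
  obtain ⟨L, hL, -⟩ := exists_extension_norm_eq (range Δ) (g.mkContinuous _ hbound)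
  exact ⟨L, fun θ => (hL _).trans (hg θ)⟩

theorem exists_apply_eq_of_continuous_comp_eq_inner (hsym : ∀ x y : E, ⟪Δ x, y⟫ = ⟪x, Δ y⟫)
    (hweak : ∀ (α : E) (L : E →L[ℝ] ℝ), (∀ θ : E, L (Δ θ) = ⟪α, θ⟫) →
      ∃ ω : E, ∀ β : E, L β = ⟪ω, β⟫)
    {α : E} {L : E →L[ℝ] ℝ} (hL : ∀ θ, L (Δ θ) = ⟪α, θ⟫) : ∃ ω, Δ ω = α := by
  obtain ⟨ω, hω⟩ := hweak α L hL
  exact ⟨ω, ext_inner_right ℝ fun θ => by rw [hsym, ← hω, hL]⟩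

theorem exists_mem_orthogonal_ker_apply_eq_of_mem_orthogonal_ker
    [(ker Δ).HasOrthogonalProjection] (hsym : ∀ x y : E, ⟪Δ x, y⟫ = ⟪x, Δ y⟫)
    (hweak : ∀ (α : E) (L : E →L[ℝ] ℝ), (∀ θ : E, L (Δ θ) = ⟪α, θ⟫) →
      ∃ ω : E, ∀ β : E, L β = ⟪ω, β⟫)
    {k : ℝ} (hcoercive : ∀ γ ∈ (ker Δ)ᗮ, ‖γ‖ ≤ k * ‖Δ γ‖) {α : E} (hα : α ∈ (ker Δ)ᗮ) :
    ∃ β ∈ (ker Δ)ᗮ, Δ β = α := by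
  obtain ⟨L, hL⟩ := exists_continuous_comp_eq_inner hcoercive hα
  obtain ⟨ω, hω⟩ := exists_apply_eq_of_continuous_comp_eq_inner hsym hweak hL
  obtain ⟨β, hβ, hΔβ⟩ := exists_mem_orthogonal_ker_apply_eq (Δ := Δ) ω
  exact ⟨β, hβ, hΔβ.trans hω⟩

end LinearMap

open LinearMap Submodule in
theorem green_operator_exists_unique_general
    {E : Type*} [NormedAddCommGroup E] [InnerProductSpace ℝ E]
    (Δ : E →ₗ[ℝ] E)
    (hsym : ∀ x y : E, ⟪Δ x, y⟫ = ⟪x, Δ y⟫)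
    (hcompact : ∀ (α : ℕ → E) (c : ℝ), 0 < c → (∀ n, ‖α n‖ ≤ c) →
      (∀ n, ‖Δ (α n)‖ ≤ c) → ∃ φ : ℕ → ℕ, StrictMono φ ∧ CauchySeq (α ∘ φ))
    (hweak : ∀ (α : E) (L : E →L[ℝ] ℝ), (∀ θ : E, L (Δ θ) = ⟪α, θ⟫) →
      ∃ ω : E, ∀ β : E, L β = ⟪ω, β⟫)
    (k : ℝ)
    (hcoercive : ∀ γ ∈ (LinearMap.ker Δ)ᗮ, ‖γ‖ ≤ k * ‖Δ γ‖) :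
    FiniteDimensional ℝ (LinearMap.ker Δ) ∧
    (∀ α : E, ∃! β : E, β ∈ (LinearMap.ker Δ)ᗮ ∧
      α - Δ β ∈ LinearMap.ker Δ ∧ Δ β ∈ (LinearMap.ker Δ)ᗮ) := by
  have hfin := finiteDimensional_ker_of_compact hcompact
  refine ⟨hfin, fun α => ?_⟩
  have hharm : α - (ker Δ).starProjection α ∈ (ker Δ)ᗮ := sub_starProjection_mem_orthogonal α
  obtain ⟨β, hβ, hΔβ⟩ :=
    exists_mem_orthogonal_ker_apply_eq_of_mem_orthogonal_ker hsym hweak hcoercive hharm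
  have hαβ : α - Δ β ∈ ker Δ := by
    rw [hΔβ, sub_sub_cancel]
    exact starProjection_apply_mem _ α
  refine ⟨β, ⟨hβ, hαβ, hΔβ ▸ hharm⟩, ?_⟩
  rintro γ ⟨hγ, hαγ, hΔγ⟩
  have hΔ : Δ γ = Δ β := eq_of_sub_mem_of_mem_orthogonal hΔγ (hΔβ ▸ hharm)
    (by simpa using (ker Δ).sub_mem hαβ hαγ)
  exact eq_of_sub_mem_of_mem_orthogonal hγ hβ (by simp [hΔ])

/-- Existence and uniqueness of the Green operator (Theorem 2, abstract form):
under the compactness, weak-regularity and coercivity hypotheses, `ker Δ` is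
finite-dimensional, and for every `α` there is a unique `β ∈ (ker Δ)ᗮ` with
`Δ β = α - H α`, where `H α` is the orthogonal projection of `α` onto `ker Δ`.
(The condition `Δ β = α - H α` is expressed by its characterization:
`α - Δ β ∈ ker Δ` and `Δ β ∈ (ker Δ)ᗮ`, i.e. `α - Δ β` is the harmonic part
of `α`.) -/
theorem green_operator_exists_unique
    {E : Type*} [NormedAddCommGroup E] [InnerProductSpace ℝ E]
    (Δ : E →ₗ[ℝ] E)
    (hsym : ∀ x y : E, ⟪Δ x, y⟫ = ⟪x, Δ y⟫)
    (hcompact : ∀ (α : ℕ → E) (c : ℝ), 0 < c → (∀ n, ‖α n‖ ≤ c) →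
      (∀ n, ‖Δ (α n)‖ ≤ c) → ∃ φ : ℕ → ℕ, StrictMono φ ∧ CauchySeq (α ∘ φ))
    (hweak : ∀ (α : E) (L : E →L[ℝ] ℝ), (∀ θ : E, L (Δ θ) = ⟪α, θ⟫) →
      ∃ ω : E, ∀ β : E, L β = ⟪ω, β⟫)
    (k : ℝ) (hk : 0 < k)
    (hcoercive : ∀ γ ∈ (LinearMap.ker Δ)ᗮ, ‖γ‖ ≤ k * ‖Δ γ‖) :
    FiniteDimensional ℝ (LinearMap.ker Δ) ∧
    (∀ α : E, ∃! β : E, β ∈ (LinearMap.ker Δ)ᗮ ∧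
      α - Δ β ∈ LinearMap.ker Δ ∧ Δ β ∈ (LinearMap.ker Δ)ᗮ) :=
  green_operator_exists_unique_general Δ hsym hcompact hweak k hcoercive
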